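/- arXiv:2102.05223 — 4 statements merged into one kernel-verified Lean document; each statement's English description precedes it below -/
import Mathlib

section
/- Fix p ∈ ℕ, a symmetric p×p real matrix Σ, and a diagonal p×p real matrix D. Let G be the 2p×2p block matrix [[Σ, Σ−D], [Σ−D, Σ]]. For every subset S ⊆ {1,…,p}, let P_S be the 2p×2p permutation matrix that exchanges index j with index p+j for every j ∈ S and fixes all other indices. Then P_S · G · P_Sᵀ = G. -/
open Matrix

/-- The permutation of `Fin p ⊕ Fin p` exchanging index `j` (i.e. `Sum.inl j`)
with index `p + j` (i.e. `Sum.inr j`) for every `j ∈ S`, fixing all other indices. -/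
def swapPerm {p : ℕ} (S : Finset (Fin p)) : Equiv.Perm (Fin p ⊕ Fin p) :=
  Function.Involutive.toPerm
    (fun x => match x with
      | Sum.inl j => if j ∈ S then Sum.inr j else Sum.inl j
      | Sum.inr j => if j ∈ S then Sum.inl j else Sum.inr j)
    (by intro x; cases x <;> dsimp only <;> split_ifs <;> simp_all)

/-- The permutation matrix of `swapPerm S`. -/
def swapPermMatrix {p : ℕ} (S : Finset (Fin p)) :
    Matrix (Fin p ⊕ Fin p) (Fin p ⊕ Fin p) ℝ :=
  Matrix.of fun i j => if swapPerm S i = j then (1 : ℝ) else 0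

theorem Matrix.permMatrix_mul_mul_transpose_permMatrix {n R : Type*} [Fintype n] [DecidableEq n]
    [NonAssocSemiring R] (σ : Equiv.Perm n) (M : Matrix n n R) :
    σ.permMatrix R * M * (σ.permMatrix R)ᵀ = M.submatrix σ σ := by
  rw [transpose_permMatrix, PEquiv.toMatrix_toPEquiv_mul, PEquiv.mul_toMatrix_toPEquiv,
    submatrix_submatrix]
  rfl

section SwapPerm

variable {p : ℕ} (S : Finset (Fin p))

theorem swapPermMatrix_eq_permMatrix : swapPermMatrix S = (swapPerm S).permMatrix ℝ := by
  ext i j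
  simp [swapPermMatrix, PEquiv.toMatrix_apply, eq_comm]

@[simp]
theorem swapPerm_inl (j : Fin p) :
    swapPerm S (Sum.inl j) = if j ∈ S then Sum.inr j else Sum.inl j := rfl

@[simp]
theorem swapPerm_inr (j : Fin p) :
    swapPerm S (Sum.inr j) = if j ∈ S then Sum.inl j else Sum.inr j := rfl

/-- Conjugation by `swapPerm S` moves the entry `(a, b)` between a diagonal and an off-diagonal
block only when exactly one of `a`, `b` lies in `S`, hence only when `a ≠ b`. -/
theorem fromBlocks_submatrix_swapPerm {α : Type*} (A B : Matrix (Fin p) (Fin p) α)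
    (hAB : ∀ a b, a ≠ b → A a b = B a b) :
    (fromBlocks A B B A).submatrix (swapPerm S) (swapPerm S) = fromBlocks A B B A := by
  ext (a | a) (b | b) <;> by_cases ha : a ∈ S <;> by_cases hb : b ∈ S <;>
    rcases eq_or_ne a b with rfl | hab <;> simp_all

end SwapPerm

theorem swapPermMatrix_conj_knockoffGram_general
    {p : ℕ} (Sg D : Matrix (Fin p) (Fin p) ℝ)
    (hD : D.IsDiag) (S : Finset (Fin p)) :
    swapPermMatrix S * Matrix.fromBlocks Sg (Sg - D) (Sg - D) Sg *
      (swapPermMatrix S)ᵀ = Matrix.fromBlocks Sg (Sg - D) (Sg - D) Sg := by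
  rw [swapPermMatrix_eq_permMatrix, permMatrix_mul_mul_transpose_permMatrix]
  exact fromBlocks_submatrix_swapPerm S _ _ fun a b hab => by simp [hD hab]

/-- The knockoff joint covariance matrix `G = [[Σ, Σ−D], [Σ−D, Σ]]` is invariant
under conjugation by any swap permutation matrix: `P_S G P_Sᵀ = G`. -/
theorem swapPermMatrix_conj_knockoffGram
    {p : ℕ} (Sg D : Matrix (Fin p) (Fin p) ℝ)
    (hSg : Sg.IsSymm) (hD : D.IsDiag) (S : Finset (Fin p)) :
    swapPermMatrix S * Matrix.fromBlocks Sg (Sg - D) (Sg - D) Sg *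
      (swapPermMatrix S)ᵀ = Matrix.fromBlocks Sg (Sg - D) (Sg - D) Sg :=
  swapPermMatrix_conj_knockoffGram_general Sg D hD S
end

section
/- Fix p ∈ ℕ, a symmetric positive definite p×p real matrix Σ, and a diagonal p×p real matrix D = diag(s). Then the 2p×2p block matrix G = [[Σ, Σ−D], [Σ−D, Σ]] is positive semidefinite if and only if the Schur complement 2D − D Σ⁻¹ D is positive semidefinite. -/
/-!
Since `Σ` is positive definite, `G` is positive semidefinite iff its Schur complement
`Σ - (Σ - D) Σ⁻¹ (Σ - D)` is; expanding, the `Σ Σ⁻¹ Σ` term cancels `Σ` and what remains is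
`2D - D Σ⁻¹ D`. Diagonality of `D` is what makes the off-diagonal blocks of `G` adjoint to
each other, as the Schur complement criterion requires.
-/

open Matrix

namespace Matrix

variable {n : Type*} [Fintype n] [DecidableEq n]

theorem sub_sub_mul_inv_mul_sub {R : Type*} [CommRing R] {A : Matrix n n R} (hA : IsUnit A.det)
    (D : Matrix n n R) :
    A - (A - D) * A⁻¹ * (A - D) = (2 : R) • D - D * A⁻¹ * D := by
  simp only [Matrix.sub_mul, Matrix.mul_sub, Matrix.mul_assoc, mul_nonsing_inv A hA,
    nonsing_inv_mul A hA, Matrix.one_mul, Matrix.mul_one, two_smul]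
  abel

theorem PosDef.fromBlocks_self_posSemidef_iff {K : Type*} [Field K] [PartialOrder K] [StarRing K]
    [StarOrderedRing K] {A B : Matrix n n K} (hA : A.PosDef) (hB : B.IsHermitian) :
    (fromBlocks A B B A).PosSemidef ↔ (A - B * A⁻¹ * B).PosSemidef := by
  have : Invertible A := hA.isUnit.invertible
  simpa only [hB.eq] using hA.fromBlocks₁₁ B A

end Matrix

theorem knockoffGram_posSemidef_iff_schur_general
    {p : ℕ} (Sg D : Matrix (Fin p) (Fin p) ℝ)
    (hSgPD : Sg.PosDef) (hD : D.IsDiag) :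
    (Matrix.fromBlocks Sg (Sg - D) (Sg - D) Sg).PosSemidef ↔
      ((2 : ℝ) • D - D * Sg⁻¹ * D).PosSemidef := by
  have hB : (Sg - D).IsHermitian := hSgPD.isHermitian.sub (isHermitian_iff_isSymm.mpr hD.isSymm)
  rw [hSgPD.fromBlocks_self_posSemidef_iff hB,
    sub_sub_mul_inv_mul_sub ((isUnit_iff_isUnit_det Sg).mp hSgPD.isUnit) D]

/-- For `Σ` symmetric positive definite and `D` diagonal, the knockoff joint
covariance matrix `G = [[Σ, Σ−D], [Σ−D, Σ]]` is positive semidefinite if and only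
if the Schur complement `2D − D Σ⁻¹ D` is positive semidefinite. -/
theorem knockoffGram_posSemidef_iff_schur
    {p : ℕ} (Sg D : Matrix (Fin p) (Fin p) ℝ)
    (hSgSymm : Sg.IsSymm) (hSgPD : Sg.PosDef) (hD : D.IsDiag) :
    (Matrix.fromBlocks Sg (Sg - D) (Sg - D) Sg).PosSemidef ↔
      ((2 : ℝ) • D - D * Sg⁻¹ * D).PosSemidef :=
  knockoffGram_posSemidef_iff_schur_general Sg D hSgPD hD
end

section
/- (Optimality of the greedy BKF selection rule.) Let p ∈ ℕ, let q : {1,…,p} → [0,1] be nondecreasing, and let α ≥ 0. Call a subset S ⊆ {1,…,p} feasible if Σ_{j ∈ S} q_j ≤ α · |S| (the empty set is feasible). Suppose the set {k ≥ 1 : Σ_{j=1}^{k} q_j ≤ α k} is nonempty and let k* be its maximum, with greedy selection Ŝ = {1,…,k*} (and Ŝ = ∅ if the set is empty). Then Ŝ is feasible and for every feasible subset S, Σ_{j ∈ S} (1 − q_j) ≤ Σ_{j ∈ Ŝ} (1 − q_j); that is, the greedy prefix selection maximizes the posterior expected number of true discoveries among all selections whose Bayesian FDR is at most α. -/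
def prefixSet (p k : ℕ) : Finset (Fin p) :=
  Finset.univ.filter (fun j : Fin p => (j : ℕ) < k)

lemma aux_le {m : ℕ} (f : Fin m → ℕ) (hf : StrictMono f) (i : Fin m) : (i : ℕ) ≤ f i := by
  obtain ⟨n, hn⟩ := i
  induction n with
  | zero => exact Nat.zero_le _
  | succ k ih =>
    have hk : k < m := Nat.lt_of_succ_lt hn
    have h1 := ih hk
    have h2 : f ⟨k, hk⟩ < f ⟨k+1, hn⟩ := hf (by simp [Fin.lt_def])
    simp only [Fin.val_mk] at h1 ⊢
    omega

lemma prefix_eq_map {p m : ℕ} (hmp : m ≤ p) :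
    prefixSet p m = Finset.univ.map (Fin.castLEEmb hmp) := by
  ext j
  simp only [prefixSet, Finset.mem_filter, Finset.mem_univ, true_and, Finset.mem_map,
    Fin.castLEEmb_apply]
  constructor
  · intro hj; exact ⟨⟨j, hj⟩, by simp⟩
  · rintro ⟨i, -, rfl⟩; simp

lemma S_eq_map {p : ℕ} (S : Finset (Fin p)) :
    S = Finset.univ.map (S.orderEmbOfFin rfl).toEmbedding := by
  ext j
  simp only [Finset.mem_map, Finset.mem_univ, true_and, RelEmbedding.coe_toEmbedding]
  constructor
  · intro hj
    have := Finset.range_orderEmbOfFin S (k := S.card) rfl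
    have hj' : j ∈ Set.range (S.orderEmbOfFin rfl) := by rw [this]; exact hj
    obtain ⟨i, hi⟩ := hj'
    exact ⟨i, hi⟩
  · rintro ⟨i, rfl⟩; exact Finset.orderEmbOfFin_mem _ _ _

lemma prefix_sum_le {p : ℕ} (q : Fin p → ℝ) (hq : Monotone q) (S : Finset (Fin p)) :
    ∑ j ∈ prefixSet p S.card, q j ≤ ∑ j ∈ S, q j := by
  have hmp : S.card ≤ p := by
    simpa using Finset.card_le_card (Finset.subset_univ S)
  rw [prefix_eq_map hmp, Finset.sum_map]
  conv_rhs => rw [S_eq_map S]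
  rw [Finset.sum_map]
  apply Finset.sum_le_sum
  intro i _
  apply hq
  have hmono : StrictMono (fun i : Fin S.card => ((S.orderEmbOfFin rfl i : Fin p) : ℕ)) :=
    fun a b hab => by exact_mod_cast (S.orderEmbOfFin rfl).strictMono hab
  have := aux_le _ hmono i
  simpa [Fin.le_def] using this

lemma prefix_card {p k : ℕ} (hk : k ≤ p) : (prefixSet p k).card = k := by
  rw [prefix_eq_map hk, Finset.card_map, Finset.card_univ, Fintype.card_fin]

/-- Optimality of the greedy BKF selection rule: if `q` (the sorted posterior null
probabilities, valued in `[0,1]`) is nondecreasing, `α ≥ 0`, a selection `S` is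
feasible when `∑_{j∈S} q j ≤ α |S|` (i.e. `BFDR(S) ≤ α`), and `kstar` is the
largest `k ∈ {1,…,p}` whose prefix is feasible, then the greedy prefix selection
`Ŝ = prefixSet p kstar` is feasible and maximizes the posterior expected number of
true discoveries `∑_{j∈S} (1 − q j)` among all feasible selections. -/
theorem greedy_selection_optimal
    {p : ℕ} (q : Fin p → ℝ) (hq : Monotone q)
    (h01 : ∀ j, 0 ≤ q j ∧ q j ≤ 1)
    (α : ℝ) (hα : 0 ≤ α)
    (kstar : ℕ) (hk1 : 1 ≤ kstar) (hkp : kstar ≤ p)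
    (hfeas : ∑ j ∈ prefixSet p kstar, q j ≤ α * kstar)
    (hmax : ∀ k : ℕ, 1 ≤ k → k ≤ p →
      (∑ j ∈ prefixSet p k, q j ≤ α * k) → k ≤ kstar) :
    (∑ j ∈ prefixSet p kstar, q j ≤ α * (prefixSet p kstar).card) ∧
    ∀ S : Finset (Fin p), (∑ j ∈ S, q j ≤ α * S.card) →
      ∑ j ∈ S, (1 - q j) ≤ ∑ j ∈ prefixSet p kstar, (1 - q j) := by
  refine ⟨by rw [prefix_card hkp]; exact hfeas, ?_⟩
  intro S hS
  set m := S.card with hm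
  have hmp : m ≤ p := by simpa [hm] using Finset.card_le_card (Finset.subset_univ S)
  -- prefix of size m has smaller q-sum
  have hps := prefix_sum_le q hq S
  -- m ≤ kstar
  have hmk : m ≤ kstar := by
    rcases Nat.eq_zero_or_pos m with h0 | h0
    · omega
    · exact hmax m h0 hmp (hps.trans hS)
  -- ∑_S (1 - q) ≤ ∑_{prefix m} (1 - q)
  have h1 : ∑ j ∈ S, (1 - q j) ≤ ∑ j ∈ prefixSet p m, (1 - q j) := by
    rw [Finset.sum_sub_distrib, Finset.sum_sub_distrib, Finset.sum_const, Finset.sum_const,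
      prefix_card hmp, ← hm]
    linarith
  -- prefix m ⊆ prefix kstar, terms nonneg
  have h2 : ∑ j ∈ prefixSet p m, (1 - q j) ≤ ∑ j ∈ prefixSet p kstar, (1 - q j) := by
    apply Finset.sum_le_sum_of_subset_of_nonneg
    · intro j hj
      simp only [prefixSet, Finset.mem_filter, Finset.mem_univ, true_and] at hj ⊢
      omega
    · intro j _ _
      linarith [(h01 j).2]
  linarith
end

section
/- Fix p ∈ ℕ and let (X, X̃) be a random vector in ℝ^p × ℝ^p with square-integrable coordinates such that for every subset S ⊆ {1,…,p} the law of swap_S(X, X̃) equals the law of (X, X̃). Then the knockoff-diagnostic statistic has expectation zero: E[ Σ_{j ≠ k} ( X̃_j X̃_k + 2 X_j X̃_k − 3 X_j X_k ) ] = 0, where the sum is over all ordered pairs j ≠ k in {1,…,p}. -/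
/-!
Swapping the coordinates in `{j, k}` turns `X̃_j X̃_k` into `X_j X_k`, and swapping
the coordinate `k` alone turns `X_j X̃_k` into `X_j X_k`. By exchangeability both have
the same expectation as `X_j X_k`, so every off-diagonal term has mean
`(1 + 2 - 3) E[X_j X_k] = 0`.
-/

open MeasureTheory

/-- The swap map on `ℝ^p × ℝ^p`: exchanges the `j`-th coordinates of the two
vectors for every `j ∈ S` and leaves the other coordinates unchanged. -/
def knockoffSwap {p : ℕ} (S : Finset (Fin p)) :
    ((Fin p → ℝ) × (Fin p → ℝ)) → ((Fin p → ℝ) × (Fin p → ℝ)) :=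
  fun b =>
    (fun j => if j ∈ S then b.2 j else b.1 j,
     fun j => if j ∈ S then b.1 j else b.2 j)

open ProbabilityTheory

lemma measurable_knockoffSwap {p : ℕ} (S : Finset (Fin p)) :
    Measurable (knockoffSwap S) :=
  (measurable_pi_lambda _ fun j => by split_ifs <;> fun_prop).prodMk
    (measurable_pi_lambda _ fun j => by split_ifs <;> fun_prop)

section

variable {Ω : Type*} [MeasurableSpace Ω] {P : Measure Ω} {p : ℕ} {X Xt : Ω → Fin p → ℝ}

lemma identDistrib_knockoffSwap (hX : AEMeasurable X P) (hXt : AEMeasurable Xt P)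
    {S : Finset (Fin p)}
    (hS : P.map (fun ω => knockoffSwap S (X ω, Xt ω)) = P.map (fun ω => (X ω, Xt ω))) :
    IdentDistrib (fun ω => knockoffSwap S (X ω, Xt ω)) (fun ω => (X ω, Xt ω)) P P where
  aemeasurable_fst := (measurable_knockoffSwap S).comp_aemeasurable (hX.prodMk hXt)
  aemeasurable_snd := hX.prodMk hXt
  map_eq := hS

lemma integral_knockoff_mul_knockoff_eq {j k : Fin p}
    (h : IdentDistrib (fun ω => knockoffSwap {j, k} (X ω, Xt ω)) (fun ω => (X ω, Xt ω)) P P) :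
    ∫ ω, Xt ω j * Xt ω k ∂P = ∫ ω, X ω j * X ω k ∂P := by
  have := (h.comp (u := fun b => b.1 j * b.1 k) (by fun_prop)).integral_eq
  simpa [knockoffSwap] using this

lemma integral_mul_knockoff_eq {j k : Fin p} (hjk : j ≠ k)
    (h : IdentDistrib (fun ω => knockoffSwap {k} (X ω, Xt ω)) (fun ω => (X ω, Xt ω)) P P) :
    ∫ ω, X ω j * Xt ω k ∂P = ∫ ω, X ω j * X ω k ∂P := by
  have := (h.comp (u := fun b => b.1 j * b.1 k) (by fun_prop)).integral_eq
  simpa [knockoffSwap, hjk] using this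

lemma integrable_diagnostic_term (hL2X : ∀ j, MemLp (fun ω => X ω j) 2 P)
    (hL2Xt : ∀ j, MemLp (fun ω => Xt ω j) 2 P) (j k : Fin p) :
    Integrable (fun ω => Xt ω j * Xt ω k + 2 * (X ω j * Xt ω k) - 3 * (X ω j * X ω k)) P :=
  (((hL2Xt j).integrable_mul (hL2Xt k)).add
    (((hL2X j).integrable_mul (hL2Xt k)).const_mul 2)).sub
    (((hL2X j).integrable_mul (hL2X k)).const_mul 3)

lemma integral_diagnostic_term_eq_zero (hL2X : ∀ j, MemLp (fun ω => X ω j) 2 P)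
    (hL2Xt : ∀ j, MemLp (fun ω => Xt ω j) 2 P) {j k : Fin p} (hjk : j ≠ k)
    (hjk_swap :
      IdentDistrib (fun ω => knockoffSwap {j, k} (X ω, Xt ω)) (fun ω => (X ω, Xt ω)) P P)
    (hk_swap :
      IdentDistrib (fun ω => knockoffSwap {k} (X ω, Xt ω)) (fun ω => (X ω, Xt ω)) P P) :
    ∫ ω, Xt ω j * Xt ω k + 2 * (X ω j * Xt ω k) - 3 * (X ω j * X ω k) ∂P = 0 := by
  have hXtXt : Integrable (fun ω => Xt ω j * Xt ω k) P := (hL2Xt j).integrable_mul (hL2Xt k)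
  have hXXt : Integrable (fun ω => X ω j * Xt ω k) P := (hL2X j).integrable_mul (hL2Xt k)
  have hXX : Integrable (fun ω => X ω j * X ω k) P := (hL2X j).integrable_mul (hL2X k)
  have hfirst : Integrable (fun ω => Xt ω j * Xt ω k + 2 * (X ω j * Xt ω k)) P :=
    hXtXt.add (hXXt.const_mul 2)
  rw [integral_sub hfirst (hXX.const_mul 3),
    integral_add hXtXt (hXXt.const_mul 2), integral_const_mul, integral_const_mul,
    integral_knockoff_mul_knockoff_eq hjk_swap, integral_mul_knockoff_eq hjk hk_swap]
  ring

end

theorem knockoff_diagnostic_mean_zero_general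
    {Ω : Type*} [MeasurableSpace Ω] (P : Measure Ω)
    {p : ℕ} (X Xt : Ω → (Fin p → ℝ))
    (hL2X : ∀ j : Fin p, MemLp (fun ω => X ω j) 2 P)
    (hL2Xt : ∀ j : Fin p, MemLp (fun ω => Xt ω j) 2 P)
    (hswap : ∀ S : Finset (Fin p),
      P.map (fun ω => knockoffSwap S (X ω, Xt ω)) = P.map (fun ω => (X ω, Xt ω))) :
    (∫ ω, ∑ j : Fin p, ∑ k ∈ Finset.univ.erase j,
      (Xt ω j * Xt ω k + 2 * (X ω j * Xt ω k) - 3 * (X ω j * X ω k)) ∂P) = 0 := by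
  have hXm : AEMeasurable X P :=
    aemeasurable_pi_lambda _ fun j => (hL2X j).aestronglyMeasurable.aemeasurable
  have hXtm : AEMeasurable Xt P :=
    aemeasurable_pi_lambda _ fun j => (hL2Xt j).aestronglyMeasurable.aemeasurable
  have hexch (S : Finset (Fin p)) := identDistrib_knockoffSwap hXm hXtm (hswap S)
  have hterm := integrable_diagnostic_term hL2X hL2Xt
  rw [integral_finsetSum _ fun j _ => integrable_finsetSum _ fun k _ => hterm j k]
  refine Finset.sum_eq_zero fun j _ => ?_
  rw [integral_finsetSum _ fun k _ => hterm j k]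
  exact Finset.sum_eq_zero fun k hk => integral_diagnostic_term_eq_zero hL2X hL2Xt
    (Finset.ne_of_mem_erase hk).symm (hexch _) (hexch _)

/-- If `(X, X̃)` has square-integrable coordinates and its law is invariant under
every swap map (model-X knockoff exchangeability), then the knockoff diagnostic
statistic `∑_{j ≠ k} (X̃_j X̃_k + 2 X_j X̃_k − 3 X_j X_k)` has expectation zero. -/
theorem knockoff_diagnostic_mean_zero
    {Ω : Type*} [MeasurableSpace Ω] (P : Measure Ω) [IsProbabilityMeasure P]
    {p : ℕ} (X Xt : Ω → (Fin p → ℝ)) (hX : Measurable X) (hXt : Measurable Xt)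
    (hL2X : ∀ j : Fin p, MemLp (fun ω => X ω j) 2 P)
    (hL2Xt : ∀ j : Fin p, MemLp (fun ω => Xt ω j) 2 P)
    (hswap : ∀ S : Finset (Fin p),
      P.map (fun ω => knockoffSwap S (X ω, Xt ω)) = P.map (fun ω => (X ω, Xt ω))) :
    (∫ ω, ∑ j : Fin p, ∑ k ∈ Finset.univ.erase j,
      (Xt ω j * Xt ω k + 2 * (X ω j * Xt ω k) - 3 * (X ω j * X ω k)) ∂P) = 0 :=
  knockoff_diagnostic_mean_zero_general P X Xt hL2X hL2Xt hswap
end
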